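/- arXiv:1509.08097 — 4 statements merged into one kernel-verified Lean document; each statement's English description precedes it below -/
import Mathlib

section
/- Let 1 < p < ∞ and let (X_n)_{n≥1} be a sequence of real Banach spaces each of which has the Opial property. Then the p-Cesàro sum [⊕_{n∈ℕ} X_n]_{ces_p} has the Opial property: for every sequence (x^{(k)})_{k∈ℕ} in the Cesàro sum converging weakly to 0 (equivalently, via the isometric embedding S with (Sx)(n) = (1/n)(x_1,…,x_n), such that (S x^{(k)})_k converges weakly to 0 in the ℓ^p-sum [⊕_{n∈ℕ} (X_1 ⊕₁ ⋯ ⊕₁ X_n)]_p) and every nonzero x in the Cesàro sum, limsup_{k→∞} ‖x^{(k)}‖_{ces_p} < limsup_{k→∞} ‖x^{(k)} − x‖_{ces_p}. -/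
open Filter
open scoped ENNReal Topology

/-- The Cesàro norm `‖x‖_{ces_p} = (∑_{n≥1} ((1/n) ∑_{i=1}^n ‖x_i‖)^p)^{1/p}` of a
vector-valued sequence `x` (indexed by `ℕ` starting from `0`). -/
noncomputable def cesNorm (p : ℝ) {X : ℕ → Type*} [∀ n, NormedAddCommGroup (X n)]
    (x : ∀ n, X n) : ℝ :=
  (∑' n : ℕ, ((∑ i ∈ Finset.range (n + 1), ‖x i‖) / ((n : ℝ) + 1)) ^ p) ^ (1 / p)

/-- Membership in the `p`-Cesàro sum `[⊕ₙ Xₙ]_{ces_p}`. -/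
def MemCes (p : ℝ) {X : ℕ → Type*} [∀ n, NormedAddCommGroup (X n)] (x : ∀ n, X n) : Prop :=
  Summable fun n : ℕ => ((∑ i ∈ Finset.range (n + 1), ‖x i‖) / ((n : ℝ) + 1)) ^ p

/-- `X₁ ⊕₁ ⋯ ⊕₁ Xₙ`, the finite direct sum with the `ℓ¹`-norm. -/
abbrev cesTarget (X : ℕ → Type*) (n : ℕ) : Type _ := PiLp 1 (fun i : Fin (n + 1) => X i)

/-- Saejung's embedding `S`, `(Sx)(n) = (1/n)(x₁, …, xₙ)`, from the Cesàro sum into the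
`ℓ^p`-sum of the spaces `X₁ ⊕₁ ⋯ ⊕₁ Xₙ`. -/
noncomputable def cesEmbed {X : ℕ → Type*} [∀ n, NormedAddCommGroup (X n)]
    [∀ n, NormedSpace ℝ (X n)] (x : ∀ n, X n) : ∀ n, cesTarget X n :=
  fun n => ((n : ℝ) + 1)⁻¹ • (WithLp.equiv 1 (∀ i : Fin (n + 1), X i)).symm (fun i => x i)

def OpialProp (Y : Type*) [NormedAddCommGroup Y] [NormedSpace ℝ Y] : Prop :=
  ∀ u : ℕ → Y, (∀ φ : Y →L[ℝ] ℝ, Tendsto (fun k => φ (u k)) atTop (𝓝 0)) →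
    ∀ x : Y, x ≠ 0 →
      limsup (fun k => ‖u k‖) atTop < limsup (fun k => ‖u k - x‖) atTop

/-!
Saejung's map `S` identifies the Cesàro sum isometrically with a subspace of the `ℓ^p`-sum of the
spaces `X₁ ⊕₁ ⋯ ⊕₁ Xₙ`, so it suffices that the Opial property passes to finite `ℓ¹`-sums and to
`ℓ^p`-sums. In both cases pass to an ultrafilter along which all the relevant norms converge.
Coordinatewise, the Opial property of the factors gives `lim ‖uₖ i‖ ≤ lim ‖uₖ i - x i‖`, strictly
where `x i ≠ 0`. For `ℓ¹` the norms are the sums of these limits. For `ℓ^p`, the truncation `x_s`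
of `x` to a finite set `s` of coordinates satisfies
`lim ‖uₖ - x_s‖ ^ p = lim ‖uₖ‖ ^ p + ∑_{i ∈ s} (lim ‖uₖ i - x i‖ ^ p - lim ‖uₖ i‖ ^ p)`,
while `‖uₖ - x_s‖ ≤ ‖uₖ - x‖ + ‖x - x_s‖` and `‖x - x_s‖ → 0`.
-/

def WeaklyNull {E : Type*} [NormedAddCommGroup E] [NormedSpace ℝ E] (u : ℕ → E) : Prop :=
  ∀ φ : E →L[ℝ] ℝ, Tendsto (fun k => φ (u k)) atTop (𝓝 0)

theorem exists_norm_le_of_forall_dual_bounded {𝕜 E ι : Type*} [RCLike 𝕜]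
    [NormedAddCommGroup E] [NormedSpace 𝕜 E] {u : ι → E}
    (h : ∀ φ : StrongDual 𝕜 E, ∃ B, ∀ i, ‖φ (u i)‖ ≤ B) :
    ∃ C, ∀ i, ‖u i‖ ≤ C := by
  obtain ⟨C, hC⟩ :=
    banach_steinhaus (g := fun i => NormedSpace.inclusionInDoubleDual 𝕜 E (u i)) h
  exact ⟨C, fun i => (NormedSpace.inclusionInDoubleDualLi 𝕜 (E := E)).norm_map (u i) ▸ hC i⟩

namespace WeaklyNull

variable {E F : Type*} [NormedAddCommGroup E] [NormedSpace ℝ E] [NormedAddCommGroup F]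
  [NormedSpace ℝ F] {u : ℕ → E}

theorem exists_norm_le (hu : WeaklyNull u) : ∃ C, ∀ k, ‖u k‖ ≤ C :=
  exists_norm_le_of_forall_dual_bounded fun φ =>
    (Metric.isBounded_range_of_tendsto _ (hu φ)).exists_norm_le.imp
      fun _ hB k => hB _ (Set.mem_range_self k)

theorem map (hu : WeaklyNull u) (L : E →L[ℝ] F) : WeaklyNull fun k => L (u k) :=
  fun φ => hu (φ.comp L)

theorem comp_strictMono (hu : WeaklyNull u) {φ : ℕ → ℕ} (hφ : StrictMono φ) :
    WeaklyNull fun k => u (φ k) :=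
  fun ψ => (hu ψ).comp hφ.tendsto_atTop

end WeaklyNull

theorem Ultrafilter.exists_tendsto_of_abs_le {α : Type*} (𝒰 : Ultrafilter α) {f : α → ℝ}
    {C : ℝ} (hf : ∀ a, |f a| ≤ C) : ∃ c, Tendsto f (𝒰 : Filter α) (𝓝 c) := by
  obtain ⟨c, -, hc⟩ := isCompact_Icc.ultrafilter_le_nhds (𝒰.map f) <|
    le_principal_iff.mpr (Eventually.of_forall (f := (𝒰 : Filter α)) fun a => abs_le.mp (hf a))
  exact ⟨c, hc⟩

namespace OpialProp

variable {Y : Type*} [NormedAddCommGroup Y] [NormedSpace ℝ Y]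

theorem lt_of_tendsto_ultrafilter (hOp : OpialProp Y) {u : ℕ → Y} (hu : WeaklyNull u) {x : Y}
    (hx : x ≠ 0) {𝒰 : Ultrafilter ℕ} (h𝒰 : (𝒰 : Filter ℕ) ≤ atTop) {a b : ℝ}
    (ha : Tendsto (fun k => ‖u k‖) (𝒰 : Filter ℕ) (𝓝 a))
    (hb : Tendsto (fun k => ‖u k - x‖) (𝒰 : Filter ℕ) (𝓝 b)) :
    a < b := by
  have hab : MapClusterPt (a, b) atTop fun k => (‖u k‖, ‖u k - x‖) :=
    mapClusterPt_iff_ultrafilter.mpr ⟨𝒰, h𝒰, ha.prodMk_nhds hb⟩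
  obtain ⟨φ, hφ, hlim⟩ := hab.tendsto_subseq
  have ha' : Tendsto (fun k => ‖u (φ k)‖) atTop (𝓝 a) := (continuous_fst.tendsto _).comp hlim
  have hb' : Tendsto (fun k => ‖u (φ k) - x‖) atTop (𝓝 b) := (continuous_snd.tendsto _).comp hlim
  simpa only [ha'.limsup_eq, hb'.limsup_eq] using hOp _ (hu.comp_strictMono hφ) x hx

theorem exists_tendsto_ultrafilter (hOp : OpialProp Y) {u : ℕ → Y} (hu : WeaklyNull u) (x : Y)
    {𝒰 : Ultrafilter ℕ} (h𝒰 : (𝒰 : Filter ℕ) ≤ atTop) :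
    ∃ a b, Tendsto (fun k => ‖u k‖) (𝒰 : Filter ℕ) (𝓝 a) ∧
      Tendsto (fun k => ‖u k - x‖) (𝒰 : Filter ℕ) (𝓝 b) ∧ a ≤ b ∧ (x ≠ 0 → a < b) := by
  obtain ⟨C, hC⟩ := hu.exists_norm_le
  obtain ⟨a, ha⟩ := 𝒰.exists_tendsto_of_abs_le fun k => (abs_norm (u k)).trans_le (hC k)
  obtain ⟨b, hb⟩ := 𝒰.exists_tendsto_of_abs_le fun k => (abs_norm (u k - x)).trans_le <|
    (norm_sub_le _ _).trans (add_le_add (hC k) le_rfl)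
  refine ⟨a, b, ha, hb, ?_, fun hx => hOp.lt_of_tendsto_ultrafilter hu hx h𝒰 ha hb⟩
  rcases eq_or_ne x 0 with rfl | hx
  · simp only [sub_zero] at hb
    exact (tendsto_nhds_unique ha hb).le
  · exact (hOp.lt_of_tendsto_ultrafilter hu hx h𝒰 ha hb).le

end OpialProp

theorem opialProp_of_lt_of_tendsto_ultrafilter {Y : Type*} [NormedAddCommGroup Y]
    [NormedSpace ℝ Y]
    (H : ∀ u : ℕ → Y, WeaklyNull u → ∀ x : Y, x ≠ 0 →
      ∀ 𝒰 : Ultrafilter ℕ, (𝒰 : Filter ℕ) ≤ atTop → ∀ a b : ℝ,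
        Tendsto (fun k => ‖u k‖) (𝒰 : Filter ℕ) (𝓝 a) →
        Tendsto (fun k => ‖u k - x‖) (𝒰 : Filter ℕ) (𝓝 b) → a < b) :
    OpialProp Y := by
  intro u hu x hx
  obtain ⟨C, hC⟩ := WeaklyNull.exists_norm_le hu
  have hbdd : ∀ y, IsBoundedUnder (· ≤ ·) atTop fun k => ‖u k - y‖ := fun y =>
    isBoundedUnder_of ⟨C + ‖y‖, fun k => (norm_sub_le _ _).trans (add_le_add (hC k) le_rfl)⟩
  obtain ⟨𝒰, h𝒰, ha⟩ := mapClusterPt_iff_ultrafilter.mp <|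
    MapClusterPt.limsup (isCoboundedUnder_le_of_le atTop fun k => norm_nonneg (u k))
      (by simpa using hbdd 0)
  obtain ⟨b, hb⟩ := 𝒰.exists_tendsto_of_abs_le fun k => (abs_norm (u k - x)).trans_le <|
    (norm_sub_le _ _).trans (add_le_add (hC k) le_rfl)
  exact (H u hu x hx 𝒰 h𝒰 _ b ha hb).trans_le <|
    (mapClusterPt_iff_ultrafilter.mpr ⟨𝒰, h𝒰, hb⟩).le_limsup (hbdd x)

theorem PiLp.opialProp_one {ι : Type*} [Fintype ι] {Z : ι → Type*}
    [∀ i, NormedAddCommGroup (Z i)] [∀ i, NormedSpace ℝ (Z i)] (hOp : ∀ i, OpialProp (Z i)) :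
    OpialProp (PiLp 1 Z) := by
  refine opialProp_of_lt_of_tendsto_ultrafilter fun u hu c hc 𝒰 h𝒰 a b ha hb => ?_
  choose α β hα hβ hαβ hlt using fun i =>
    (hOp i).exists_tendsto_ultrafilter (hu.map (PiLp.proj (𝕜 := ℝ) 1 Z i)) (c i) h𝒰
  obtain ⟨i₀, hi₀⟩ : ∃ i, c i ≠ 0 := by
    by_contra! h
    exact hc (PiLp.ext h)
  have ha' : a = ∑ i, α i := tendsto_nhds_unique ha <| by
    simpa only [PiLp.norm_eq_of_L1, PiLp.proj_apply] using
      tendsto_finsetSum _ fun i _ => hα i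
  have hb' : b = ∑ i, β i := tendsto_nhds_unique hb <| by
    simpa only [PiLp.norm_eq_of_L1, PiLp.proj_apply, PiLp.sub_apply] using
      tendsto_finsetSum _ fun i _ => hβ i
  rw [ha', hb']
  exact Finset.sum_lt_sum (fun i _ => hαβ i) ⟨i₀, Finset.mem_univ _, hlt i₀ hi₀⟩

theorem lp.norm_sub_sum_single_rpow {α : Type*} [DecidableEq α] {E : α → Type*}
    [∀ i, NormedAddCommGroup (E i)] {q : ℝ≥0∞} (hq : 0 < q.toReal) (f g : lp E q)
    (s : Finset α) :
    ‖f - ∑ i ∈ s, lp.single q i (g i)‖ ^ q.toReal =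
      ‖f‖ ^ q.toReal + ∑ i ∈ s, (‖f i - g i‖ ^ q.toReal - ‖f i‖ ^ q.toReal) := by
  set h := f - ∑ i ∈ s, lp.single q i (g i)
  have hh : ∀ i, h i = f i - if i ∈ s then g i else 0 := fun i => by
    simp only [h, lp.coeFn_sub, lp.coeFn_sum, lp.coeFn_single, Pi.sub_apply, Finset.sum_apply,
      Finset.sum_pi_single]
  have hd : HasSum (fun i => ‖h i‖ ^ q.toReal - ‖f i‖ ^ q.toReal)
      (∑ i ∈ s, (‖f i - g i‖ ^ q.toReal - ‖f i‖ ^ q.toReal)) := by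
    have hs : ∀ i ∈ s, ‖h i‖ ^ q.toReal - ‖f i‖ ^ q.toReal =
        ‖f i - g i‖ ^ q.toReal - ‖f i‖ ^ q.toReal := fun i hi => by rw [hh i, if_pos hi]
    rw [← Finset.sum_congr rfl hs]
    exact hasSum_sum_of_ne_finset_zero fun i hi => by rw [hh i, if_neg hi, sub_zero, sub_self]
  refine (lp.hasSum_norm hq h).unique ?_
  simpa only [add_sub_cancel] using (lp.hasSum_norm hq f).add hd

theorem lp.opialProp {ι : Type*} {E : ι → Type*} [∀ i, NormedAddCommGroup (E i)]
    [∀ i, NormedSpace ℝ (E i)] {q : ℝ≥0∞} [Fact (1 ≤ q)] (hq : q ≠ ⊤)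
    (hOp : ∀ i, OpialProp (E i)) : OpialProp (lp E q) := by
  classical
  have hr : 0 < q.toReal := ENNReal.toReal_pos (zero_lt_one.trans_le Fact.out).ne' hq
  set r := q.toReal
  refine opialProp_of_lt_of_tendsto_ultrafilter fun u hu v hv 𝒰 h𝒰 a b ha hb => ?_
  choose α β hα hβ hαβ hlt using fun i =>
    (hOp i).exists_tendsto_ultrafilter
      (hu.map (lp.evalCLM ℝ E q i) : WeaklyNull fun k => u k i) (v i) h𝒰
  have hα0 : ∀ i, 0 ≤ α i := fun i => ge_of_tendsto' (hα i) fun k => norm_nonneg _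
  obtain ⟨i₀, hi₀⟩ : ∃ i, v i ≠ 0 := by
    by_contra! h
    exact hv (lp.ext (funext h))
  set t : Finset ι → lp E q := fun s => ∑ i ∈ s, lp.single q i (v i)
  have key : ∀ s, i₀ ∈ s → a ^ r + (β i₀ ^ r - α i₀ ^ r) ≤ (b + ‖v - t s‖) ^ r := by
    intro s hs
    have hlim : Tendsto (fun k => ‖u k - t s‖ ^ r) 𝒰
        (𝓝 (a ^ r + ∑ i ∈ s, (β i ^ r - α i ^ r))) := by
      simp only [t, r, lp.norm_sub_sum_single_rpow hr]
      exact (ha.rpow_const (Or.inr hr.le)).add <| tendsto_finsetSum _ fun i _ =>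
        ((hβ i).rpow_const (Or.inr hr.le)).sub ((hα i).rpow_const (Or.inr hr.le))
    have hle : ∀ k, ‖u k - t s‖ ^ r ≤ (‖u k - v‖ + ‖v - t s‖) ^ r := fun k =>
      Real.rpow_le_rpow (norm_nonneg _) (norm_sub_le_norm_sub_add_norm_sub _ _ _) hr.le
    have hsum : β i₀ ^ r - α i₀ ^ r ≤ ∑ i ∈ s, (β i ^ r - α i ^ r) :=
      Finset.single_le_sum (fun i _ => sub_nonneg.mpr <|
        Real.rpow_le_rpow (hα0 i) (hαβ i) hr.le) hs
    linarith [le_of_tendsto_of_tendsto' hlim ((hb.add_const _).rpow_const (Or.inr hr.le)) hle]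
  have htail : Tendsto (fun s => (b + ‖v - t s‖) ^ r) atTop (𝓝 (b ^ r)) := by
    have := (tendsto_iff_norm_sub_tendsto_zero.mp (lp.hasSum_single hq v)).const_add b
    simpa [norm_sub_rev] using this.rpow_const (Or.inr hr.le)
  have hgap : a ^ r + (β i₀ ^ r - α i₀ ^ r) ≤ b ^ r := ge_of_tendsto htail <|
    (eventually_ge_atTop {i₀}).mono fun s hs => key s (hs (Finset.mem_singleton_self _))
  have hαβ₀ : α i₀ ^ r < β i₀ ^ r := Real.rpow_lt_rpow (hα0 i₀) (hlt i₀ hi₀) hr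
  exact (Real.rpow_lt_rpow_iff (ge_of_tendsto' ha fun k => norm_nonneg _)
    (ge_of_tendsto' hb fun k => norm_nonneg _) hr).mp (by linarith)

section Cesaro

variable {X : ℕ → Type*} [∀ n, NormedAddCommGroup (X n)] [∀ n, NormedSpace ℝ (X n)]

theorem norm_cesEmbed (x : ∀ n, X n) (n : ℕ) :
    ‖cesEmbed x n‖ = (∑ i ∈ Finset.range (n + 1), ‖x i‖) / ((n : ℝ) + 1) := by
  rw [cesEmbed, norm_smul, PiLp.norm_eq_of_L1, Real.norm_of_nonneg (by positivity),
    inv_mul_eq_div]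
  simp only [WithLp.equiv_symm_apply, PiLp.toLp_apply]
  rw [Fin.sum_univ_eq_sum_range (fun i => ‖x i‖)]

theorem cesEmbed_sub (x z : ∀ n, X n) : cesEmbed (x - z) = cesEmbed x - cesEmbed z := by
  ext n : 1
  simp only [cesEmbed, Pi.sub_apply, ← smul_sub]
  rfl

theorem cesEmbed_eq_zero_iff {x : ∀ n, X n} : cesEmbed x = 0 ↔ x = 0 := by
  refine ⟨fun h => funext fun n => ?_, fun h => ?_⟩
  · simpa [cesEmbed, Nat.cast_add_one_ne_zero] using congrArg (fun w => w n (Fin.last n)) h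
  · ext n i
    simp [cesEmbed, h]

theorem memℓp_cesEmbed {p : ℝ} (hp : 0 < p) {x : ∀ n, X n} (hx : MemCes p x) :
    Memℓp (cesEmbed x) (ENNReal.ofReal p) :=
  memℓp_gen <| by
    simp only [ENNReal.toReal_ofReal hp.le, norm_cesEmbed]
    exact hx

theorem cesNorm_eq_norm {p : ℝ} (hp : 0 < p) {x : ∀ n, X n}
    (y : lp (cesTarget X) (ENNReal.ofReal p)) (hy : ⇑y = cesEmbed x) :
    cesNorm p x = ‖y‖ := by
  rw [lp.norm_eq_tsum_rpow (by rwa [ENNReal.toReal_ofReal hp.le]), ENNReal.toReal_ofReal hp.le,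
    cesNorm, hy]
  simp only [norm_cesEmbed]

end Cesaro

theorem stmt1_general (p : ℝ) [Fact (1 ≤ ENNReal.ofReal p)]
    (X : ℕ → Type*) [∀ n, NormedAddCommGroup (X n)] [∀ n, NormedSpace ℝ (X n)]
    (hOp : ∀ n, OpialProp (X n))
    (x : ℕ → ∀ n, X n)
    (y : ℕ → lp (cesTarget X) (ENNReal.ofReal p))
    (hy : ∀ k, (y k : ∀ n, cesTarget X n) = cesEmbed (x k))
    (hweak : ∀ φ : lp (cesTarget X) (ENNReal.ofReal p) →L[ℝ] ℝ,
      Tendsto (fun k => φ (y k)) atTop (𝓝 0))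
    (z : ∀ n, X n) (hz : MemCes p z) (hz0 : z ≠ 0) :
    limsup (fun k => cesNorm p (x k)) atTop < limsup (fun k => cesNorm p (x k - z)) atTop := by
  have hp : 0 < p := zero_lt_one.trans_le (ENNReal.one_le_ofReal.mp Fact.out)
  let v : lp (cesTarget X) (ENNReal.ofReal p) := ⟨cesEmbed z, memℓp_cesEmbed hp hz⟩
  have hv : v ≠ 0 := fun h => hz0 <| cesEmbed_eq_zero_iff.mp <| congrArg (⇑) h
  have hOpial := lp.opialProp ENNReal.ofReal_ne_top
    (fun n => PiLp.opialProp_one (Z := fun i : Fin (n + 1) => X i) fun i => hOp i) y hweak v hv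
  have hsub : ∀ k, cesNorm p (x k - z) = ‖y k - v‖ := fun k =>
    cesNorm_eq_norm hp _ (by rw [lp.coeFn_sub, hy, cesEmbed_sub])
  simpa only [fun k => cesNorm_eq_norm hp _ (hy k), hsub] using hOpial

/-- If `1 < p < ∞` and every `Xₙ` has the Opial property, then the
`p`-Cesàro sum `[⊕ₙ Xₙ]_{ces_p}` has the Opial property (weak convergence being expressed
via the isometric embedding `S` into the `ℓ^p`-sum `[⊕ₙ (X₁ ⊕₁ ⋯ ⊕₁ Xₙ)]_p`). -/
theorem stmt1 (p : ℝ) (hp : 1 < p) [Fact (1 ≤ ENNReal.ofReal p)]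
    (X : ℕ → Type*) [∀ n, NormedAddCommGroup (X n)] [∀ n, NormedSpace ℝ (X n)]
    [∀ n, CompleteSpace (X n)]
    (hOp : ∀ n, OpialProp (X n))
    (x : ℕ → ∀ n, X n) (hxmem : ∀ k, MemCes p (x k))
    (y : ℕ → lp (cesTarget X) (ENNReal.ofReal p))
    (hy : ∀ k, (y k : ∀ n, cesTarget X n) = cesEmbed (x k))
    (hweak : ∀ φ : lp (cesTarget X) (ENNReal.ofReal p) →L[ℝ] ℝ,
      Tendsto (fun k => φ (y k)) atTop (𝓝 0))
    (z : ∀ n, X n) (hz : MemCes p z) (hz0 : z ≠ 0) :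
    limsup (fun k => cesNorm p (x k)) atTop < limsup (fun k => cesNorm p (x k - z)) atTop :=
  stmt1_general p X hOp x y hy hweak z hz hz0
end

section
/- Let 1 < p < ∞ and let (X_n)_{n≥1} be a sequence of real Banach spaces each of which has the nonstrict Opial property. Then the p-Cesàro sum [⊕_{n∈ℕ} X_n]_{ces_p} has the nonstrict Opial property: for every sequence (x^{(k)})_{k∈ℕ} in the Cesàro sum converging weakly to 0 (equivalently, via the isometric embedding S with (Sx)(n) = (1/n)(x_1,…,x_n), such that (S x^{(k)})_k converges weakly to 0 in the ℓ^p-sum [⊕_{n∈ℕ} (X_1 ⊕₁ ⋯ ⊕₁ X_n)]_p) and every x in the Cesàro sum, limsup_{k→∞} ‖x^{(k)}‖_{ces_p} ≤ limsup_{k→∞} ‖x^{(k)} − x‖_{ces_p}. -/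
/-! The coordinate sequences `(x k i)ₖ` are weakly null (test against functionals factoring
through `S`), so the Opial property of `X i` gives `‖x k i‖ ≤ ‖x k i - z i‖ + ε` for all large
`k`; averaging, the same holds for every Cesàro mean. Hence the positive part of
`cesAvg (x k) - cesAvg (x k - z)` tends to `0` coordinatewise while staying below
`cesAvg z ∈ ℓ^p`, so by dominated convergence its `ℓ^p` norm tends to `0`, and Minkowski's
inequality gives `‖x k‖ ≤ ‖x k - z‖ + o(1)`. Weakly null sequences are bounded
(Banach–Steinhaus), which keeps all the limsups finite. -/

open Filter
open scoped ENNReal Topology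

/-- A real Banach space has the nonstrict Opial property if
`limsup ‖xₖ‖ ≤ limsup ‖xₖ − x‖` for every weakly null sequence `(xₖ)` and every `x`. -/
def NonstrictOpial (Y : Type*) [NormedAddCommGroup Y] [NormedSpace ℝ Y] : Prop :=
  ∀ u : ℕ → Y, (∀ φ : Y →L[ℝ] ℝ, Tendsto (fun k => φ (u k)) atTop (𝓝 0)) →
    ∀ x : Y, limsup (fun k => ‖u k‖) atTop ≤ limsup (fun k => ‖u k - x‖) atTop

theorem exists_norm_le_of_weakly_tendsto_zero {𝕜 Y : Type*} [RCLike 𝕜] [NormedAddCommGroup Y]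
    [NormedSpace 𝕜 Y] {u : ℕ → Y}
    (hu : ∀ φ : Y →L[𝕜] 𝕜, Tendsto (fun k => φ (u k)) atTop (𝓝 0)) :
    ∃ C, ∀ k, ‖u k‖ ≤ C := by
  obtain ⟨C, hC⟩ := banach_steinhaus (g := fun k => NormedSpace.inclusionInDoubleDual 𝕜 Y (u k))
    fun φ => by
      obtain ⟨C, hC⟩ := (hu φ).norm.bddAbove_range
      exact ⟨C, fun k => hC ⟨k, rfl⟩⟩
  refine ⟨C, fun k => ?_⟩
  rw [← (NormedSpace.inclusionInDoubleDualLi 𝕜).norm_map]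
  exact hC k

theorem limsup_le_limsup_of_forall_eventually_le_add {ι : Type*} {l : Filter ι} [l.NeBot]
    {u v : ι → ℝ} (hu : IsCoboundedUnder (· ≤ ·) l u) (hv : IsBoundedUnder (· ≤ ·) l v)
    (hv' : IsCoboundedUnder (· ≤ ·) l v) (h : ∀ η > 0, ∀ᶠ k in l, u k ≤ v k + η) :
    limsup u l ≤ limsup v l := by
  refine le_of_forall_pos_le_add fun η hη => ?_
  rw [← limsup_add_const l v η hv hv']
  obtain ⟨b, hb⟩ := hv
  exact limsup_le_limsup (h η hη) hu ⟨b + η, by simpa using hb⟩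

/-- Passing to a subsequence on which the inequality fails by `ε` contradicts the Opial property. -/
theorem NonstrictOpial.eventually_norm_le_norm_sub_add {Y : Type*} [NormedAddCommGroup Y]
    [NormedSpace ℝ Y] (hY : NonstrictOpial Y) {u : ℕ → Y}
    (hu : ∀ φ : Y →L[ℝ] ℝ, Tendsto (fun k => φ (u k)) atTop (𝓝 0)) (x : Y) {ε : ℝ}
    (hε : 0 < ε) : ∀ᶠ k in atTop, ‖u k‖ ≤ ‖u k - x‖ + ε := by
  by_contra h
  obtain ⟨σ, hσ, hlt⟩ := extraction_of_frequently_atTop (not_eventually.1 h)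
  have huσ : ∀ φ : Y →L[ℝ] ℝ, Tendsto (fun k => φ (u (σ k))) atTop (𝓝 0) :=
    fun φ => (hu φ).comp hσ.tendsto_atTop
  obtain ⟨C, hC⟩ := exists_norm_le_of_weakly_tendsto_zero huσ
  have hbdd : IsBoundedUnder (· ≤ ·) atTop fun k => ‖u (σ k) - x‖ :=
    isBoundedUnder_of ⟨C + ‖x‖, fun k => (norm_sub_le _ _).trans (by linarith [hC k])⟩
  have hcobdd : IsCoboundedUnder (· ≤ ·) atTop fun k => ‖u (σ k) - x‖ :=
    isCoboundedUnder_le_of_le atTop fun k => norm_nonneg _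
  have hgap : limsup (fun k => ‖u (σ k) - x‖) atTop + ε ≤ limsup (fun k => ‖u (σ k)‖) atTop := by
    rw [← limsup_add_const _ _ _ hbdd hcobdd]
    exact limsup_le_limsup (Eventually.of_forall fun k => (not_le.1 (hlt k)).le)
      (isCoboundedUnder_le_of_le atTop fun k => by positivity) (isBoundedUnder_of ⟨C, hC⟩)
  linarith [hY _ huσ x]

section TsumRpow

variable {ι : Type*} {p : ℝ}

theorem summable_rpow_of_le_add (hp : 1 ≤ p) {f g h : ι → ℝ} (hf : ∀ n, 0 ≤ f n)
    (hg : ∀ n, 0 ≤ g n) (hh : ∀ n, 0 ≤ h n) (hg_sum : Summable fun n => g n ^ p)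
    (hh_sum : Summable fun n => h n ^ p) (hfgh : ∀ n, f n ≤ g n + h n) :
    Summable fun n => f n ^ p :=
  (Real.summable_Lp_add_of_nonneg hp hg hh hg_sum hh_sum).of_nonneg_of_le
    (fun n => Real.rpow_nonneg (hf n) p) fun n =>
      Real.rpow_le_rpow (hf n) (hfgh n) (zero_le_one.trans hp)

theorem tsum_rpow_rpow_le_add_of_le_add (hp : 1 ≤ p) {f g h : ι → ℝ} (hf : ∀ n, 0 ≤ f n)
    (hg : ∀ n, 0 ≤ g n) (hh : ∀ n, 0 ≤ h n) (hg_sum : Summable fun n => g n ^ p)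
    (hh_sum : Summable fun n => h n ^ p) (hfgh : ∀ n, f n ≤ g n + h n) :
    (∑' n, f n ^ p) ^ (1 / p) ≤ (∑' n, g n ^ p) ^ (1 / p) + (∑' n, h n ^ p) ^ (1 / p) := by
  have hp0 : 0 < p := zero_lt_one.trans_le hp
  calc (∑' n, f n ^ p) ^ (1 / p) ≤ (∑' n, (g n + h n) ^ p) ^ (1 / p) := by
        refine Real.rpow_le_rpow (tsum_nonneg fun n => Real.rpow_nonneg (hf n) p) ?_ (by positivity)
        exact (summable_rpow_of_le_add hp hf hg hh hg_sum hh_sum hfgh).tsum_le_tsum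
          (fun n => Real.rpow_le_rpow (hf n) (hfgh n) hp0.le)
          (Real.summable_Lp_add_of_nonneg hp hg hh hg_sum hh_sum)
    _ ≤ _ := Real.Lp_add_le_tsum_of_nonneg' hp hg hh hg_sum hh_sum

theorem eventually_tsum_rpow_rpow_le_add {κ : Type*} {l : Filter κ} (hp : 1 ≤ p)
    {f g : κ → ℕ → ℝ} {c : ℕ → ℝ} (hf : ∀ k n, 0 ≤ f k n) (hg : ∀ k n, 0 ≤ g k n)
    (hc : ∀ n, 0 ≤ c n) (hg_sum : ∀ k, Summable fun n => g k n ^ p)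
    (hc_sum : Summable fun n => c n ^ p) (hfgc : ∀ k n, f k n ≤ g k n + c n)
    (hfg : ∀ n, ∀ ε > 0, ∀ᶠ k in l, f k n ≤ g k n + ε) {η : ℝ} (hη : 0 < η) :
    ∀ᶠ k in l, (∑' n, f k n ^ p) ^ (1 / p) ≤ (∑' n, g k n ^ p) ^ (1 / p) + η := by
  have hp0 : 0 < p := zero_lt_one.trans_le hp
  set e : κ → ℕ → ℝ := fun k n => max (f k n - g k n) 0
  have he : ∀ k n, 0 ≤ e k n := fun k n => le_max_right _ _
  have hec : ∀ k n, e k n ≤ c n := fun k n => max_le (by linarith [hfgc k n]) (hc n)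
  have hfge : ∀ k n, f k n ≤ g k n + e k n := fun k n => by linarith [le_max_left (f k n - g k n) 0]
  have he_lim : ∀ n, Tendsto (fun k => e k n ^ p) l (𝓝 0) := by
    intro n
    have hen : Tendsto (fun k => e k n) l (𝓝 0) :=
      tendsto_order.2 ⟨fun a ha => Eventually.of_forall fun k => ha.trans_le (he k n),
        fun a ha => (hfg n (a / 2) (by positivity)).mono fun k hk => max_lt (by linarith) ha⟩
    simpa [Real.zero_rpow hp0.ne'] using hen.rpow_const (Or.inr hp0.le)
  have hnorm_lim : Tendsto (fun k => (∑' n, e k n ^ p) ^ (1 / p)) l (𝓝 0) := by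
    have hsum_lim := tendsto_tsum_of_dominated_convergence hc_sum he_lim
      (Eventually.of_forall fun k n => by
        rw [Real.norm_of_nonneg (by positivity)]
        exact Real.rpow_le_rpow (he k n) (hec k n) hp0.le)
    have h := hsum_lim.rpow_const (p := 1 / p) (Or.inr (one_div_pos.2 hp0).le)
    rwa [tsum_zero, Real.zero_rpow (one_div_pos.2 hp0).ne'] at h
  filter_upwards [hnorm_lim.eventually (gt_mem_nhds hη)] with k hk
  have hmink := tsum_rpow_rpow_le_add_of_le_add hp (hf k) (hg k) (he k) (hg_sum k)
    (hc_sum.of_nonneg_of_le (fun n => by positivity) fun n =>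
      Real.rpow_le_rpow (he k n) (hec k n) hp0.le) (hfge k)
  linarith

end TsumRpow

section Cesaro

variable {X : ℕ → Type*} [∀ n, NormedAddCommGroup (X n)]

noncomputable def cesAvg (x : ∀ n, X n) (n : ℕ) : ℝ :=
  (∑ i ∈ Finset.range (n + 1), ‖x i‖) / ((n : ℝ) + 1)

theorem cesAvg_nonneg (x : ∀ n, X n) (n : ℕ) : 0 ≤ cesAvg x n := by
  unfold cesAvg
  positivity

theorem cesNorm_eq_tsum_cesAvg (p : ℝ) (x : ∀ n, X n) :
    cesNorm p x = (∑' n, cesAvg x n ^ p) ^ (1 / p) :=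
  rfl

theorem cesAvg_le_add_of_norm_le_add {x v w : ∀ n, X n} (h : ∀ i, ‖x i‖ ≤ ‖v i‖ + ‖w i‖)
    (n : ℕ) : cesAvg x n ≤ cesAvg v n + cesAvg w n := by
  unfold cesAvg
  rw [← add_div, ← Finset.sum_add_distrib]
  gcongr with i
  exact h i

theorem cesAvg_le_cesAvg_sub_add (x z : ∀ n, X n) (n : ℕ) :
    cesAvg x n ≤ cesAvg (x - z) n + cesAvg z n :=
  cesAvg_le_add_of_norm_le_add (fun i => norm_le_norm_sub_add (x i) (z i)) n

theorem cesAvg_sub_le (x z : ∀ n, X n) (n : ℕ) : cesAvg (x - z) n ≤ cesAvg x n + cesAvg z n :=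
  cesAvg_le_add_of_norm_le_add (fun i => norm_sub_le (x i) (z i)) n

theorem eventually_cesAvg_le_add {κ : Type*} {l : Filter κ} {x w : κ → ∀ n, X n}
    (h : ∀ i, ∀ ε > 0, ∀ᶠ k in l, ‖x k i‖ ≤ ‖w k i‖ + ε) (n : ℕ) {ε : ℝ} (hε : 0 < ε) :
    ∀ᶠ k in l, cesAvg (x k) n ≤ cesAvg (w k) n + ε := by
  filter_upwards [(Finset.range (n + 1)).eventually_all.2 fun i _ => h i ε hε] with k hk
  unfold cesAvg
  rw [div_add' _ _ _ (by positivity), div_le_div_iff_of_pos_right (by positivity)]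
  calc ∑ i ∈ Finset.range (n + 1), ‖x k i‖ ≤ ∑ i ∈ Finset.range (n + 1), (‖w k i‖ + ε) :=
        Finset.sum_le_sum hk
    _ = _ := by simp [Finset.sum_add_distrib, add_comm, mul_comm]

theorem MemCes.sub {p : ℝ} (hp : 1 ≤ p) {x z : ∀ n, X n} (hx : MemCes p x) (hz : MemCes p z) :
    MemCes p (x - z) :=
  summable_rpow_of_le_add hp (cesAvg_nonneg _) (cesAvg_nonneg x) (cesAvg_nonneg z) hx hz
    (cesAvg_sub_le x z)

theorem cesNorm_sub_le {p : ℝ} (hp : 1 ≤ p) {x z : ∀ n, X n} (hx : MemCes p x)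
    (hz : MemCes p z) : cesNorm p (x - z) ≤ cesNorm p x + cesNorm p z :=
  tsum_rpow_rpow_le_add_of_le_add hp (cesAvg_nonneg _) (cesAvg_nonneg x) (cesAvg_nonneg z) hx hz
    (cesAvg_sub_le x z)

theorem cesNorm_nonneg (p : ℝ) (x : ∀ n, X n) : 0 ≤ cesNorm p x :=
  Real.rpow_nonneg (tsum_nonneg fun n => Real.rpow_nonneg (cesAvg_nonneg x n) p) _

end Cesaro

section Embedding

variable {X : ℕ → Type*} [∀ n, NormedAddCommGroup (X n)] [∀ n, NormedSpace ℝ (X n)]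

theorem norm_cesEmbed_s2 (x : ∀ n, X n) (n : ℕ) : ‖cesEmbed x n‖ = cesAvg x n := by
  rw [cesEmbed, norm_smul, PiLp.norm_eq_of_L1, cesAvg, Real.norm_of_nonneg (by positivity),
    div_eq_inv_mul]
  simp [Fin.sum_univ_eq_sum_range (fun i => ‖x i‖)]

theorem lp.norm_eq_cesNorm {p : ℝ} (hp : 0 < p) [Fact (1 ≤ ENNReal.ofReal p)]
    {y : lp (cesTarget X) (ENNReal.ofReal p)} {x : ∀ n, X n} (hy : ⇑y = cesEmbed x) :
    ‖y‖ = cesNorm p x := by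
  rw [lp.norm_eq_tsum_rpow (by rwa [ENNReal.toReal_ofReal hp.le]), ENNReal.toReal_ofReal hp.le, hy]
  simp only [norm_cesEmbed_s2, cesNorm_eq_tsum_cesAvg]

theorem weakly_tendsto_zero_apply_of_cesEmbed {q : ℝ≥0∞} [Fact (1 ≤ q)] {x : ℕ → ∀ n, X n}
    {y : ℕ → lp (cesTarget X) q} (hy : ∀ k, ⇑(y k) = cesEmbed (x k))
    (hweak : ∀ φ : lp (cesTarget X) q →L[ℝ] ℝ, Tendsto (fun k => φ (y k)) atTop (𝓝 0))
    (i : ℕ) (φ : X i →L[ℝ] ℝ) : Tendsto (fun k => φ (x k i)) atTop (𝓝 0) := by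
  convert hweak (((i : ℝ) + 1) •
    φ.comp ((PiLp.proj 1 _ (Fin.last i)).comp (lp.evalCLM ℝ (cesTarget X) q i))) using 2 with k
  change _ = ((i : ℝ) + 1) * φ ((y k : ∀ n, cesTarget X n) i (Fin.last i))
  simp [hy, cesEmbed]
  field_simp

end Embedding

theorem stmt2_general (p : ℝ) (hp : 1 < p) [Fact (1 ≤ ENNReal.ofReal p)]
    (X : ℕ → Type*) [∀ n, NormedAddCommGroup (X n)] [∀ n, NormedSpace ℝ (X n)]
    (hOp : ∀ n, NonstrictOpial (X n))
    (x : ℕ → ∀ n, X n) (hxmem : ∀ k, MemCes p (x k))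
    (y : ℕ → lp (cesTarget X) (ENNReal.ofReal p))
    (hy : ∀ k, (y k : ∀ n, cesTarget X n) = cesEmbed (x k))
    (hweak : ∀ φ : lp (cesTarget X) (ENNReal.ofReal p) →L[ℝ] ℝ,
      Tendsto (fun k => φ (y k)) atTop (𝓝 0))
    (z : ∀ n, X n) (hz : MemCes p z) :
    limsup (fun k => cesNorm p (x k)) atTop ≤ limsup (fun k => cesNorm p (x k - z)) atTop := by
  obtain ⟨C, hC⟩ := exists_norm_le_of_weakly_tendsto_zero hweak
  simp only [lp.norm_eq_cesNorm (zero_lt_one.trans hp) (hy _)] at hC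
  have hsub_le : ∀ k, cesNorm p (x k - z) ≤ C + cesNorm p z := fun k =>
    (cesNorm_sub_le hp.le (hxmem k) hz).trans (by linarith [hC k])
  have hcoord : ∀ i, ∀ ε > 0, ∀ᶠ k in atTop, ‖x k i‖ ≤ ‖x k i - z i‖ + ε := fun i ε hε =>
    (hOp i).eventually_norm_le_norm_sub_add
      (weakly_tendsto_zero_apply_of_cesEmbed hy hweak i) (z i) hε
  refine limsup_le_limsup_of_forall_eventually_le_add
    (isCoboundedUnder_le_of_le atTop fun k => cesNorm_nonneg p _)
    (isBoundedUnder_of ⟨_, hsub_le⟩) (isCoboundedUnder_le_of_le atTop fun k => cesNorm_nonneg p _)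
    fun η hη => ?_
  exact eventually_tsum_rpow_rpow_le_add hp.le (fun k => cesAvg_nonneg (x k))
    (fun k => cesAvg_nonneg (x k - z)) (cesAvg_nonneg z) (fun k => (hxmem k).sub hp.le hz) hz
    (fun k => cesAvg_le_cesAvg_sub_add (x k) z) (eventually_cesAvg_le_add hcoord) hη

/-- If `1 < p < ∞` and every `Xₙ` has the nonstrict Opial property, then the
`p`-Cesàro sum `[⊕ₙ Xₙ]_{ces_p}` has the nonstrict Opial property (weak convergence being
expressed via the isometric embedding `S` into the `ℓ^p`-sum `[⊕ₙ (X₁ ⊕₁ ⋯ ⊕₁ Xₙ)]_p`). -/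
theorem stmt2 (p : ℝ) (hp : 1 < p) [Fact (1 ≤ ENNReal.ofReal p)]
    (X : ℕ → Type*) [∀ n, NormedAddCommGroup (X n)] [∀ n, NormedSpace ℝ (X n)]
    [∀ n, CompleteSpace (X n)]
    (hOp : ∀ n, NonstrictOpial (X n))
    (x : ℕ → ∀ n, X n) (hxmem : ∀ k, MemCes p (x k))
    (y : ℕ → lp (cesTarget X) (ENNReal.ofReal p))
    (hy : ∀ k, (y k : ∀ n, cesTarget X n) = cesEmbed (x k))
    (hweak : ∀ φ : lp (cesTarget X) (ENNReal.ofReal p) →L[ℝ] ℝ,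
      Tendsto (fun k => φ (y k)) atTop (𝓝 0))
    (z : ∀ n, X n) (hz : MemCes p z) :
    limsup (fun k => cesNorm p (x k)) atTop ≤ limsup (fun k => cesNorm p (x k - z)) atTop :=
  stmt2_general p hp X hOp x hxmem y hy hweak z hz
end

section
/- Let 1 ≤ p < ∞ and let X be a real Banach space with the nonstrict Opial property. Let (f_n)_{n∈ℕ} be a sequence in Ces_p(X) with sup_n ‖f_n‖_{Ces_p(X)} < ∞ such that for almost every t ∈ [0,1] the sequence (f_n(t))_n converges weakly to 0 in X, and suppose there exists g ∈ Ces_p such that ‖f_n(t)‖ → g(t) for almost every t. Then for every f ∈ Ces_p(X), limsup_{n→∞} ‖f_n‖_{Ces_p(X)} ≤ 2^{1−1/p} limsup_{n→∞} ‖f_n − f‖_{Ces_p(X)}. -/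
open Filter MeasureTheory Set
open scoped ENNReal Topology

/-- The Cesàro function-space norm
`‖f‖_{Ces_p(X)} = (∫₀¹ ((1/t) ∫₀ᵗ ‖f(s)‖ ds)^p dt)^{1/p}` of a function `f : [0,1] → X`. -/
noncomputable def cesFNorm (p : ℝ) {X : Type*} [NormedAddCommGroup X] (f : ℝ → X) : ℝ :=
  (∫ t in Ioc (0 : ℝ) 1, ((1 / t) * ∫ s in Ioc (0 : ℝ) t, ‖f s‖) ^ p) ^ (1 / p)

/-- Membership in the Cesàro space `Ces_p(X)`: `f` is Bochner-measurable and its Cesàro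
norm is finite (expressed via the lower integral, so that finiteness is meaningful). -/
def MemCesF (p : ℝ) {X : Type*} [NormedAddCommGroup X] (f : ℝ → X) : Prop :=
  AEStronglyMeasurable f (volume.restrict (Ioc (0 : ℝ) 1)) ∧
    (∫⁻ t in Ioc (0 : ℝ) 1,
      ((∫⁻ s in Ioc (0 : ℝ) t, (‖f s‖₊ : ℝ≥0∞)) / ENNReal.ofReal t) ^ p) < ⊤

/-!
By the nonstrict Opial property, for almost every `s` the positive part `kₙ(s)` of
`‖fₙ(s)‖ - ‖fₙ(s) - f(s)‖` tends to `0`: were `‖fₙ(s) - f(s)‖ ≤ g(s) - ε` along a subsequence,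
Opial applied to that weakly null subsequence would give `g(s) ≤ g(s) - ε`. Since `0 ≤ kₙ ≤ ‖f‖`,
dominated convergence, first in the inner integrals and then in `L^p`, gives
`‖kₙ‖_{Ces_p} → 0`. The pointwise bound `‖fₙ‖ ≤ ‖fₙ - f‖ + kₙ` and the triangle inequality in
`Ces_p` then yield `limsup ‖fₙ‖ ≤ limsup ‖fₙ - f‖`, which is stronger than the claim since
`2^{1-1/p} ≥ 1`.
-/

section Opial

variable {X : Type*} [NormedAddCommGroup X] [NormedSpace ℝ X] {u : ℕ → X} {a : ℝ}

theorem NonstrictOpial.eventually_lt_norm_sub (hX : NonstrictOpial X)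
    (hu : ∀ φ : X →L[ℝ] ℝ, Tendsto (fun n => φ (u n)) atTop (𝓝 0))
    (ha : Tendsto (fun n => ‖u n‖) atTop (𝓝 a)) (x : X) {b : ℝ} (hb : b < a) :
    ∀ᶠ n in atTop, b < ‖u n - x‖ := by
  by_contra h
  obtain ⟨φ, hφ, hle⟩ := extraction_of_frequently_atTop (not_eventually.1 h)
  have hopial := hX (fun k => u (φ k)) (fun ψ => (hu ψ).comp hφ.tendsto_atTop) x
  have hlim : limsup (fun k => ‖u (φ k)‖) atTop = a := (ha.comp hφ.tendsto_atTop).limsup_eq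
  rw [hlim] at hopial
  have hsub : limsup (fun k => ‖u (φ k) - x‖) atTop ≤ b :=
    limsup_le_of_le (isCoboundedUnder_le_of_le atTop fun k => norm_nonneg _)
      (Eventually.of_forall fun k => not_lt.1 (hle k))
  linarith

theorem NonstrictOpial.tendsto_posPart_norm_sub_norm_sub (hX : NonstrictOpial X)
    (hu : ∀ φ : X →L[ℝ] ℝ, Tendsto (fun n => φ (u n)) atTop (𝓝 0))
    (ha : Tendsto (fun n => ‖u n‖) atTop (𝓝 a)) (x : X) :
    Tendsto (fun n => (‖u n‖ - ‖u n - x‖)⁺) atTop (𝓝 0) := by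
  refine tendsto_order.2 ⟨fun b hb => Eventually.of_forall fun n => hb.trans_le (posPart_nonneg _),
    fun ε hε => ?_⟩
  filter_upwards [ha.eventually_lt_const (by linarith : a < a + ε / 2),
    hX.eventually_lt_norm_sub hu ha x (by linarith : a - ε / 2 < a)] with n hn hn'
  exact max_lt (by linarith) hε

end Opial

theorem Filter.limsup_le_limsup_of_le_add_of_tendsto_zero {ι : Type*} {l : Filter ι} [l.NeBot]
    {a b c : ι → ℝ} (ha : IsCoboundedUnder (· ≤ ·) l a) (hb : IsBoundedUnder (· ≤ ·) l b)
    (hb' : IsBoundedUnder (· ≥ ·) l b) (hc : Tendsto c l (𝓝 0))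
    (habc : ∀ᶠ i in l, a i ≤ b i + c i) :
    limsup a l ≤ limsup b l :=
  calc limsup a l ≤ limsup (b + c) l :=
        limsup_le_limsup habc ha (isBoundedUnder_le_add hb hc.isBoundedUnder_le)
    _ ≤ limsup b l + limsup c l :=
        limsup_add_le hb' hb hc.isCoboundedUnder_le hc.isBoundedUnder_le
    _ = limsup b l := by rw [hc.limsup_eq, add_zero]

theorem Real.limsup_nonneg {ι : Type*} {l : Filter ι} [l.NeBot] {u : ι → ℝ}
    (hu : ∀ i, 0 ≤ u i) : 0 ≤ limsup u l :=
  Real.sInf_nonneg fun _ ha => (eventually_map.1 ha).exists.elim fun i hi => (hu i).trans hi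

section CesaroTransform

variable {E F G : Type*} [NormedAddCommGroup E] [NormedAddCommGroup F] [NormedAddCommGroup G]
  {p : ℝ}

noncomputable def cesaroTransform (h : ℝ → E) (t : ℝ) : ℝ≥0∞ :=
  (∫⁻ s in Ioc 0 t, ‖h s‖ₑ) / ENNReal.ofReal t

/-- Lower-integral version of `cesFNorm`: unlike it, monotone and subadditive without
integrability side conditions, and equal to it on `Ces_p(X)`. -/
noncomputable def cesENorm (p : ℝ) (h : ℝ → E) : ℝ≥0∞ :=
  (∫⁻ t in Ioc 0 1, cesaroTransform h t ^ p) ^ (1 / p)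

theorem measurable_cesaroTransform (h : ℝ → E) : Measurable (cesaroTransform h) :=
  (Monotone.measurable fun _ _ hst => lintegral_mono_set (Ioc_subset_Ioc_right hst)).div
    ENNReal.measurable_ofReal

theorem cesaroTransform_mono {u : ℝ → E} {v : ℝ → F} (huv : ∀ s, ‖u s‖ ≤ ‖v s‖) (t : ℝ) :
    cesaroTransform u t ≤ cesaroTransform v t :=
  ENNReal.div_le_div_right (lintegral_mono fun s => enorm_le_iff_norm_le.2 (huv s)) _

theorem cesENorm_le_add (hp : 1 ≤ p) {u : ℝ → E} {v : ℝ → F} {w : ℝ → G}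
    (hv : AEStronglyMeasurable v (volume.restrict (Ioc 0 1)))
    (huvw : ∀ s, ‖u s‖ ≤ ‖v s‖ + ‖w s‖) :
    cesENorm p u ≤ cesENorm p v + cesENorm p w := by
  have hpt : ∀ t ∈ Ioc (0 : ℝ) 1,
      cesaroTransform u t ^ p ≤ (cesaroTransform v + cesaroTransform w) t ^ p := by
    intro t ht
    have hvt := (hv.mono_measure (Measure.restrict_mono_set volume
      (Ioc_subset_Ioc_right ht.2))).enorm
    refine ENNReal.rpow_le_rpow ?_ (by linarith)
    rw [Pi.add_apply, cesaroTransform, cesaroTransform, cesaroTransform, ← ENNReal.add_div,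
      ← lintegral_add_left' hvt]
    refine ENNReal.div_le_div_right (lintegral_mono fun s => ?_) _
    simpa only [← ofReal_norm, ← ENNReal.ofReal_add (norm_nonneg _) (norm_nonneg _)]
      using ENNReal.ofReal_le_ofReal (huvw s)
  calc cesENorm p u ≤ (∫⁻ t in Ioc 0 1, (cesaroTransform v + cesaroTransform w) t ^ p) ^ (1 / p) :=
        ENNReal.rpow_le_rpow (setLIntegral_mono' measurableSet_Ioc hpt) (by positivity)
    _ ≤ cesENorm p v + cesENorm p w :=
        ENNReal.lintegral_Lp_add_le (measurable_cesaroTransform v).aemeasurable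
          (measurable_cesaroTransform w).aemeasurable hp

theorem cesFNorm_nonneg (p : ℝ) (h : ℝ → E) : 0 ≤ cesFNorm p h :=
  Real.rpow_nonneg (setIntegral_nonneg measurableSet_Ioc fun _ ht => Real.rpow_nonneg
    (mul_nonneg (one_div_nonneg.2 ht.1.le) (integral_nonneg fun _ => norm_nonneg _)) p) _

theorem memCesF_iff (hp : 0 < p) {h : ℝ → E} :
    MemCesF p h ↔ AEStronglyMeasurable h (volume.restrict (Ioc 0 1)) ∧ cesENorm p h < ⊤ := by
  rw [cesENorm, ENNReal.rpow_lt_top_iff_of_pos (by positivity)]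
  rfl

theorem MemCesF.cesENorm_lt_top (hp : 0 < p) {h : ℝ → E} (hh : MemCesF p h) :
    cesENorm p h < ⊤ :=
  ((memCesF_iff hp).1 hh).2

theorem MemCesF.sub (hp : 1 ≤ p) {u v : ℝ → E} (hu : MemCesF p u) (hv : MemCesF p v) :
    MemCesF p (fun s => u s - v s) := by
  have hp0 : 0 < p := by linarith
  refine (memCesF_iff hp0).2 ⟨hu.1.sub hv.1, ?_⟩
  exact (cesENorm_le_add hp hu.1 fun s => norm_sub_le _ _).trans_lt
    (ENNReal.add_lt_top.2 ⟨hu.cesENorm_lt_top hp0, hv.cesENorm_lt_top hp0⟩)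

theorem MemCesF.mono (hp : 0 ≤ p) {u : ℝ → E} {v : ℝ → F} (hv : MemCesF p v)
    (hu : AEStronglyMeasurable u (volume.restrict (Ioc 0 1))) (huv : ∀ s, ‖u s‖ ≤ ‖v s‖) :
    MemCesF p u :=
  ⟨hu, (lintegral_mono fun t => ENNReal.rpow_le_rpow (cesaroTransform_mono huv t) hp).trans_lt
    hv.2⟩

theorem MemCesF.ae_lintegral_lt_top (hp : 0 < p) {h : ℝ → E} (hh : MemCesF p h) :
    ∀ᵐ t ∂(volume.restrict (Ioc 0 1)), ∫⁻ s in Ioc 0 t, ‖h s‖ₑ < ⊤ := by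
  filter_upwards [ae_lt_top ((measurable_cesaroTransform h).pow_const p) hh.2.ne] with t ht
  refine lt_top_iff_ne_top.2 fun htop => ht.ne ?_
  rw [cesaroTransform, htop, ENNReal.top_div_of_ne_top ENNReal.ofReal_ne_top,
    ENNReal.top_rpow_of_pos hp]

theorem cesFNorm_eq_toReal_cesENorm {h : ℝ → E} (hh : MemCesF p h) :
    cesFNorm p h = (cesENorm p h).toReal := by
  have hpt : EqOn (fun t => ((1 / t) * ∫ s in Ioc 0 t, ‖h s‖) ^ p)
      (fun t => (cesaroTransform h t ^ p).toReal) (Ioc 0 1) := by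
    intro t ht
    have hht := hh.1.mono_measure (Measure.restrict_mono_set volume (Ioc_subset_Ioc_right ht.2))
    simp only [← ENNReal.toReal_rpow, cesaroTransform, ENNReal.toReal_div,
      ENNReal.toReal_ofReal ht.1.le, integral_norm_eq_lintegral_enorm hht, one_div_mul_eq_div]
  rw [cesFNorm, cesENorm, ← ENNReal.toReal_rpow, setIntegral_congr_fun measurableSet_Ioc hpt,
    integral_toReal ((measurable_cesaroTransform h).pow_const p).aemeasurable
      (ae_lt_top ((measurable_cesaroTransform h).pow_const p) hh.2.ne)]

theorem cesFNorm_le_add (hp : 1 ≤ p) {u : ℝ → E} {v : ℝ → F} {w : ℝ → G} (hu : MemCesF p u)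
    (hv : MemCesF p v) (hw : MemCesF p w) (huvw : ∀ s, ‖u s‖ ≤ ‖v s‖ + ‖w s‖) :
    cesFNorm p u ≤ cesFNorm p v + cesFNorm p w := by
  have hp0 : 0 < p := by linarith
  rw [cesFNorm_eq_toReal_cesENorm hu, cesFNorm_eq_toReal_cesENorm hv,
    cesFNorm_eq_toReal_cesENorm hw]
  exact ENNReal.toReal_le_add (cesENorm_le_add hp hv.1 huvw) (hv.cesENorm_lt_top hp0).ne
    (hw.cesENorm_lt_top hp0).ne

theorem tendsto_cesaroTransform_of_dominated {k : ℕ → ℝ → E} {w : ℝ → F} {t : ℝ} (ht : 0 < t)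
    (hk : ∀ n, AEStronglyMeasurable (k n) (volume.restrict (Ioc 0 t)))
    (hw : ∫⁻ s in Ioc 0 t, ‖w s‖ₑ ≠ ⊤) (hkw : ∀ n s, ‖k n s‖ ≤ ‖w s‖)
    (hlim : ∀ᵐ s ∂(volume.restrict (Ioc 0 t)), Tendsto (fun n => k n s) atTop (𝓝 0)) :
    Tendsto (fun n => cesaroTransform (k n) t) atTop (𝓝 0) := by
  have hint := tendsto_lintegral_of_dominated_convergence' (f := fun _ => 0) _
    (fun n => (hk n).enorm)
    (fun n => Eventually.of_forall fun s => enorm_le_iff_norm_le.2 (hkw n s))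
    hw (hlim.mono fun s hs => by simpa using hs.enorm)
  simpa [cesaroTransform] using
    ENNReal.Tendsto.div_const hint (Or.inr (ENNReal.ofReal_pos.2 ht).ne')

theorem tendsto_cesENorm_of_dominated (hp : 0 < p) {k : ℕ → ℝ → E} {w : ℝ → F}
    (hk : ∀ n, AEStronglyMeasurable (k n) (volume.restrict (Ioc 0 1))) (hw : MemCesF p w)
    (hkw : ∀ n s, ‖k n s‖ ≤ ‖w s‖)
    (hlim : ∀ᵐ s ∂(volume.restrict (Ioc 0 1)), Tendsto (fun n => k n s) atTop (𝓝 0)) :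
    Tendsto (fun n => cesENorm p (k n)) atTop (𝓝 0) := by
  have hpt : ∀ᵐ t ∂(volume.restrict (Ioc 0 1)),
      Tendsto (fun n => cesaroTransform (k n) t ^ p) atTop (𝓝 0) := by
    filter_upwards [ae_restrict_mem measurableSet_Ioc, hw.ae_lintegral_lt_top hp] with t ht hwt
    have hsub : Ioc 0 t ⊆ Ioc 0 1 := Ioc_subset_Ioc_right ht.2
    simpa [ENNReal.zero_rpow_of_pos hp] using (tendsto_cesaroTransform_of_dominated ht.1
      (fun n => (hk n).mono_measure (Measure.restrict_mono_set volume hsub)) hwt.ne hkw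
      (ae_restrict_of_ae_restrict_of_subset hsub hlim)).ennrpow_const p
  have hint := tendsto_lintegral_of_dominated_convergence' (f := fun _ => 0) _
    (fun n => ((measurable_cesaroTransform (k n)).pow_const p).aemeasurable)
    (fun n => Eventually.of_forall fun t =>
      ENNReal.rpow_le_rpow (cesaroTransform_mono (hkw n) t) hp.le)
    hw.2.ne hpt
  simpa [cesENorm, ENNReal.zero_rpow_of_pos (inv_pos.2 hp)] using hint.ennrpow_const (1 / p)

theorem tendsto_cesFNorm_of_dominated (hp : 0 < p) {k : ℕ → ℝ → E} {w : ℝ → F}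
    (hk : ∀ n, MemCesF p (k n)) (hw : MemCesF p w) (hkw : ∀ n s, ‖k n s‖ ≤ ‖w s‖)
    (hlim : ∀ᵐ s ∂(volume.restrict (Ioc 0 1)), Tendsto (fun n => k n s) atTop (𝓝 0)) :
    Tendsto (fun n => cesFNorm p (k n)) atTop (𝓝 0) := by
  simpa [Function.comp_def, cesFNorm_eq_toReal_cesENorm (hk _)] using
    (ENNReal.tendsto_toReal ENNReal.zero_ne_top).comp
      (tendsto_cesENorm_of_dominated hp (fun n => (hk n).1) hw hkw hlim)

end CesaroTransform

theorem NonstrictOpial.limsup_cesFNorm_le_limsup_cesFNorm_sub {p : ℝ} (hp : 1 ≤ p)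
    {X : Type*} [NormedAddCommGroup X] [NormedSpace ℝ X] (hX : NonstrictOpial X)
    {fn : ℕ → ℝ → X} (hfn : ∀ n, MemCesF p (fn n)) (hbdd : ∃ C : ℝ, ∀ n, cesFNorm p (fn n) ≤ C)
    (hweak : ∀ᵐ t ∂(volume.restrict (Ioc (0 : ℝ) 1)),
      ∀ φ : X →L[ℝ] ℝ, Tendsto (fun n => φ (fn n t)) atTop (𝓝 0))
    {g : ℝ → ℝ} (hconv : ∀ᵐ t ∂(volume.restrict (Ioc (0 : ℝ) 1)),
      Tendsto (fun n => ‖fn n t‖) atTop (𝓝 (g t)))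
    {f : ℝ → X} (hf : MemCesF p f) :
    limsup (fun n => cesFNorm p (fn n)) atTop ≤
      limsup (fun n => cesFNorm p (fun s => fn n s - f s)) atTop := by
  have hp0 : 0 < p := by linarith
  obtain ⟨C, hC⟩ := hbdd
  set k : ℕ → ℝ → ℝ := fun n s => (‖fn n s‖ - ‖fn n s - f s‖)⁺
  have hk_le : ∀ n s, ‖k n s‖ ≤ ‖f s‖ := fun n s => by
    rw [Real.norm_of_nonneg (posPart_nonneg _)]
    exact max_le (by simpa using norm_sub_norm_le (fn n s) (fn n s - f s)) (norm_nonneg _)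
  have hk_mem : ∀ n, MemCesF p (k n) := fun n => hf.mono hp0.le
    (((hfn n).1.norm.sub ((hfn n).1.sub hf.1).norm).sup aestronglyMeasurable_const) (hk_le n)
  have hk : Tendsto (fun n => cesFNorm p (k n)) atTop (𝓝 0) :=
    tendsto_cesFNorm_of_dominated hp0 hk_mem hf hk_le <| by
      filter_upwards [hweak, hconv] with s hw hc
      exact hX.tendsto_posPart_norm_sub_norm_sub hw hc (f s)
  have hsub : ∀ n, MemCesF p (fun s => fn n s - f s) := fun n => (hfn n).sub hp hf
  have hsub_le : ∀ n, cesFNorm p (fun s => fn n s - f s) ≤ C + cesFNorm p f := fun n =>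
    (cesFNorm_le_add hp (hsub n) (hfn n) hf fun s => norm_sub_le _ _).trans (by linarith [hC n])
  refine limsup_le_limsup_of_le_add_of_tendsto_zero
    (isCoboundedUnder_le_of_le atTop fun n => cesFNorm_nonneg p _)
    (isBoundedUnder_of_eventually_le (Eventually.of_forall hsub_le))
    (isBoundedUnder_of_eventually_ge (Eventually.of_forall fun n => cesFNorm_nonneg p _)) hk
    (Eventually.of_forall fun n => cesFNorm_le_add hp (hfn n) (hsub n) (hk_mem n) fun s => ?_)
  rw [Real.norm_of_nonneg (posPart_nonneg _)]
  linarith [le_posPart (‖fn n s‖ - ‖fn n s - f s‖)]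

theorem stmt6_general (p : ℝ) (hp : 1 ≤ p)
    {X : Type*} [NormedAddCommGroup X] [NormedSpace ℝ X]
    (hX : NonstrictOpial X)
    (fn : ℕ → ℝ → X) (hfn : ∀ n, MemCesF p (fn n))
    (hbdd : ∃ C : ℝ, ∀ n, cesFNorm p (fn n) ≤ C)
    (hweak : ∀ᵐ t ∂(volume.restrict (Ioc (0 : ℝ) 1)),
      ∀ φ : X →L[ℝ] ℝ, Tendsto (fun n => φ (fn n t)) atTop (𝓝 0))
    (g : ℝ → ℝ)
    (hconv : ∀ᵐ t ∂(volume.restrict (Ioc (0 : ℝ) 1)),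
      Tendsto (fun n => ‖fn n t‖) atTop (𝓝 (g t)))
    (f : ℝ → X) (hf : MemCesF p f) :
    limsup (fun n => cesFNorm p (fn n)) atTop ≤
      2 ^ (1 - 1 / p) * limsup (fun n => cesFNorm p (fun s => fn n s - f s)) atTop := by
  have hp0 : 0 < p := by linarith
  calc limsup (fun n => cesFNorm p (fn n)) atTop
      ≤ limsup (fun n => cesFNorm p (fun s => fn n s - f s)) atTop :=
        hX.limsup_cesFNorm_le_limsup_cesFNorm_sub hp hfn hbdd hweak hconv hf
    _ ≤ 2 ^ (1 - 1 / p) * limsup (fun n => cesFNorm p (fun s => fn n s - f s)) atTop :=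
        le_mul_of_one_le_left (Real.limsup_nonneg fun n => cesFNorm_nonneg p _)
          (Real.one_le_rpow one_le_two (sub_nonneg.2 ((div_le_one hp0).2 hp)))

/-- If `X` has the nonstrict Opial property, `(fₙ)` is norm-bounded in
`Ces_p(X)`, `(fₙ(t))` is weakly null a.e. and `‖fₙ(t)‖ → g(t)` a.e. for some `g ∈ Ces_p`,
then `limsup ‖fₙ‖ ≤ 2^{1−1/p} limsup ‖fₙ − f‖` for every `f ∈ Ces_p(X)`. -/
theorem stmt6 (p : ℝ) (hp : 1 ≤ p)
    {X : Type*} [NormedAddCommGroup X] [NormedSpace ℝ X] [CompleteSpace X]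
    (hX : NonstrictOpial X)
    (fn : ℕ → ℝ → X) (hfn : ∀ n, MemCesF p (fn n))
    (hbdd : ∃ C : ℝ, ∀ n, cesFNorm p (fn n) ≤ C)
    (hweak : ∀ᵐ t ∂(volume.restrict (Ioc (0 : ℝ) 1)),
      ∀ φ : X →L[ℝ] ℝ, Tendsto (fun n => φ (fn n t)) atTop (𝓝 0))
    (g : ℝ → ℝ) (hg : MemCesF p g)
    (hconv : ∀ᵐ t ∂(volume.restrict (Ioc (0 : ℝ) 1)),
      Tendsto (fun n => ‖fn n t‖) atTop (𝓝 (g t)))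
    (f : ℝ → X) (hf : MemCesF p f) :
    limsup (fun n => cesFNorm p (fn n)) atTop ≤
      2 ^ (1 - 1 / p) * limsup (fun n => cesFNorm p (fun s => fn n s - f s)) atTop :=
  stmt6_general p hp hX fn hfn hbdd hweak g hconv f hf
end

section
/- In the space c of convergent real sequences with the supremum norm, let e_n denote the sequence whose n-th entry is 1 and all other entries are 0, and let x = (1,1,1,…). Then the sequence (2e_n)_{n∈ℕ} converges weakly to 0 in c, limsup_{n→∞} ‖2e_n‖_∞ = 2, and limsup_{n→∞} ‖2e_n − x‖_∞ = 1; hence the constant 2 in the inequality limsup ‖x_n‖ ≤ 2 limsup ‖x_n − x‖ (valid for all weakly null sequences in any Banach space) is best possible. -/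
open Filter
open scoped ENNReal Topology

/-- The space `c` of convergent real sequences with the supremum norm, realized as a
subspace of `ℓ^∞`. -/
noncomputable def cSpace : Submodule ℝ (lp (fun _ : ℕ => ℝ) ∞) where
  carrier := {a | ∃ l : ℝ, Tendsto (fun n => (a : ∀ _ : ℕ, ℝ) n) atTop (𝓝 l)}
  add_mem' := by
    rintro a b ⟨la, ha⟩ ⟨lb, hb⟩
    exact ⟨la + lb, by simpa [lp.coeFn_add, Pi.add_apply] using ha.add hb⟩
  zero_mem' := ⟨0, by simp [lp.coeFn_zero]⟩
  smul_mem' := by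
    rintro c a ⟨l, h⟩
    exact ⟨c * l, by simpa [lp.coeFn_smul, Pi.smul_apply, smul_eq_mul] using h.const_mul c⟩

/-- The element `2eₙ` of `c`, where `eₙ` is the `n`-th unit vector. -/
noncomputable def eVec (n : ℕ) : cSpace :=
  ⟨lp.single ∞ n (2 : ℝ), by
    refine ⟨0, Tendsto.congr' ?_ tendsto_const_nhds⟩
    filter_upwards [eventually_gt_atTop n] with m hm
    rw [lp.single_apply]
    simp [hm.ne']⟩

/-- The constant sequence `x = (1,1,1,…)` as an element of `c`. -/
noncomputable def xVec : cSpace :=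
  ⟨⟨fun _ => (1 : ℝ), memℓp_infty ⟨1, by rintro y ⟨i, rfl⟩; simp⟩⟩,
    ⟨1, tendsto_const_nhds⟩⟩

/-! Every `2eₙ` has norm `2` and every `2eₙ - x` has norm `1`. For weak nullity, every sum
`∑_{i<N} εᵢ • 2eᵢ` with `|εᵢ| ≤ 1` has sup norm at most `2`; choosing `εᵢ = sign (φ (2eᵢ))` gives
`∑_{i<N} |φ (2eᵢ)| ≤ 2 ‖φ‖`, so `φ (2eₙ)` is summable and in particular tends to `0`. -/

theorem SignType.abs_cast_le_one {α : Type*} [Ring α] [LinearOrder α] [IsStrictOrderedRing α]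
    (s : SignType) : |(s : α)| ≤ 1 := by
  cases s <;> simp [SignType.zero_eq_zero, SignType.neg_eq_neg_one, SignType.pos_eq_one]

section WeaklyNull

variable {E : Type*} [NormedAddCommGroup E] [NormedSpace ℝ E]

theorem summable_abs_apply_of_norm_sum_smul_le {v : ℕ → E} {C : ℝ}
    (hv : ∀ (N : ℕ) (ε : ℕ → ℝ), (∀ i, |ε i| ≤ 1) → ‖∑ i ∈ Finset.range N, ε i • v i‖ ≤ C)
    (φ : E →L[ℝ] ℝ) : Summable fun n => |φ (v n)| := by
  refine summable_of_sum_range_le (c := ‖φ‖ * C) (fun n => abs_nonneg _) fun N => ?_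
  set ε : ℕ → ℝ := fun i => SignType.sign (φ (v i))
  calc ∑ i ∈ Finset.range N, |φ (v i)| = φ (∑ i ∈ Finset.range N, ε i • v i) := by
        simp [ε, map_sum, sign_mul_self]
    _ ≤ ‖φ‖ * ‖∑ i ∈ Finset.range N, ε i • v i‖ := φ.le_opNorm _ |>.trans' (le_abs_self _)
    _ ≤ ‖φ‖ * C := by gcongr; exact hv N ε fun i => SignType.abs_cast_le_one _

theorem tendsto_apply_atTop_zero_of_norm_sum_smul_le {v : ℕ → E} {C : ℝ}
    (hv : ∀ (N : ℕ) (ε : ℕ → ℝ), (∀ i, |ε i| ≤ 1) → ‖∑ i ∈ Finset.range N, ε i • v i‖ ≤ C)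
    (φ : E →L[ℝ] ℝ) : Tendsto (fun n => φ (v n)) atTop (𝓝 0) :=
  (tendsto_zero_iff_abs_tendsto_zero _).mpr
    (summable_abs_apply_of_norm_sum_smul_le hv φ).tendsto_atTop_zero

end WeaklyNull

theorem lp.norm_eq_of_forall_norm_apply_le {α : Type*} {E : α → Type*}
    [∀ i, NormedAddCommGroup (E i)] {f : lp E ∞} {C : ℝ} (hf : ∀ i, ‖f i‖ ≤ C) (k : α)
    (hk : ‖f k‖ = C) : ‖f‖ = C :=
  le_antisymm (lp.norm_le_of_forall_le (hk ▸ norm_nonneg _) hf)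
    (hk ▸ lp.norm_apply_le_norm ENNReal.top_ne_zero f k)

theorem coe_eVec (n : ℕ) : ⇑(eVec n : lp (fun _ : ℕ => ℝ) ∞) = (Pi.single n 2 : ℕ → ℝ) :=
  lp.coeFn_single ..

theorem coe_xVec : ⇑(xVec : lp (fun _ : ℕ => ℝ) ∞) = 1 := rfl

theorem norm_eVec (n : ℕ) : ‖eVec n‖ = 2 := by
  rw [Submodule.coe_norm]
  refine lp.norm_eq_of_forall_norm_apply_le (fun j => ?_) n (by simp [coe_eVec])
  rw [coe_eVec, Pi.single_apply]
  split <;> norm_num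

theorem norm_eVec_sub_xVec (n : ℕ) : ‖eVec n - xVec‖ = 1 := by
  have hcoe : ⇑((eVec n - xVec : cSpace) : lp (fun _ : ℕ => ℝ) ∞) = Pi.single n 2 - 1 := by
    rw [Submodule.coe_sub, lp.coeFn_sub, coe_eVec, coe_xVec]
  rw [Submodule.coe_norm]
  refine lp.norm_eq_of_forall_norm_apply_le (fun j => ?_) n (by rw [hcoe]; norm_num)
  rw [hcoe, Pi.sub_apply, Pi.single_apply]
  split <;> norm_num

theorem norm_sum_smul_eVec_le (N : ℕ) (ε : ℕ → ℝ) (hε : ∀ i, |ε i| ≤ 1) :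
    ‖∑ i ∈ Finset.range N, ε i • eVec i‖ ≤ 2 := by
  rw [Submodule.coe_norm]
  refine lp.norm_le_of_forall_le zero_le_two fun j => ?_
  have hcoe : ((∑ i ∈ Finset.range N, ε i • eVec i : cSpace) : lp (fun _ : ℕ => ℝ) ∞) j
      = if j ∈ Finset.range N then ε j * 2 else 0 := by
    rw [Submodule.coe_sum, lp.coeFn_sum, Finset.sum_apply]
    simp_rw [Submodule.coe_smul, lp.coeFn_smul, Pi.smul_apply, coe_eVec, smul_eq_mul,
      Pi.single_apply, mul_ite, mul_zero]
    exact Finset.sum_ite_eq _ _ _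
  rw [hcoe]
  split
  · simpa [abs_mul] using hε j
  · simp

/-- In the space `c` of convergent real sequences with the sup-norm, the
sequence `(2eₙ)` converges weakly to `0`, `limsup ‖2eₙ‖ = 2` and `limsup ‖2eₙ − x‖ = 1`
where `x = (1,1,1,…)`; hence the constant `2` in the inequality
`limsup ‖xₙ‖ ≤ 2 limsup ‖xₙ − x‖` for weakly null sequences is best possible. -/
theorem stmt12 :
    (∀ φ : cSpace →L[ℝ] ℝ, Tendsto (fun n => φ (eVec n)) atTop (𝓝 0)) ∧
      limsup (fun n => ‖eVec n‖) atTop = 2 ∧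
      limsup (fun n => ‖eVec n - xVec‖) atTop = 1 := by
  refine ⟨tendsto_apply_atTop_zero_of_norm_sum_smul_le norm_sum_smul_eVec_le, ?_, ?_⟩
  · simp only [norm_eVec, limsup_const]
  · simp only [norm_eVec_sub_xVec, limsup_const]
end
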